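/- Fix p ≥ 1 and assume that for some constant C > 0 the random variable X satisfies 0 < |X| ≤ C almost surely. Then for every ε > 0, as d → ∞, P{ |‖X‖_p / E‖X‖_p − 1| ≥ ε } ≤ 2 exp( − ε² d^{2/p − 1} μ_p^{2/p} / (2C²) + o(d^{2/p − 1}) ); more precisely, P{ |‖X‖_p − E‖X‖_p| ≥ ε E‖X‖_p } ≤ 2 exp( − ε² (E‖X‖_p)² / (2 d C²) ) for every d ≥ 1. -/

import Mathlib

open MeasureTheory ProbabilityTheory Filter

/-
A function of `d` independent coordinates that changes by at most `C` when a single coordinate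
changes is sub-Gaussian with variance proxy `d C²` (McDiarmid): conditioning on all coordinates
but the first, the first one contributes a sub-Gaussian increment by Hoeffding's lemma, and the
rest is handled by induction on `d`. On `[0, C]^d` the `p`-norm has this bounded-differences
property, because `t ↦ t ^ (1 / p)` is subadditive for `p ≥ 1`; since `|X| ≤ C` almost surely,
`‖X‖_p` agrees almost surely with the `p`-norm of the coordinates truncated at `C`. This gives
the second bound. The first follows from it, because `E‖X‖_p / d ^ (1 / p) → μ_p ^ (1 / p)` by the
strong law of large numbers and dominated convergence, so the two exponents differ by
`o(d ^ (2 / p - 1))`.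
-/

open scoped NNReal

lemma rpow_add_sub_rpow_add_le {q s u v : ℝ} (hq0 : 0 ≤ q) (hq1 : q ≤ 1) (hs : 0 ≤ s)
    (hu : 0 ≤ u) (hv : 0 ≤ v) : (s + u) ^ q - (s + v) ^ q ≤ |u - v| ^ q := by
  rcases le_total u v with huv | hvu
  · have : (s + u) ^ q ≤ (s + v) ^ q := Real.rpow_le_rpow (by linarith) (by linarith) hq0
    linarith [Real.rpow_nonneg (abs_nonneg (u - v)) q]
  · have := Real.rpow_add_le_add_rpow (add_nonneg hs hv) (sub_nonneg.2 hvu) hq0 hq1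
    rw [add_add_sub_cancel] at this
    rw [abs_of_nonneg (sub_nonneg.2 hvu)]
    linarith

lemma abs_rpow_add_sub_rpow_add_le {q s u v : ℝ} (hq0 : 0 ≤ q) (hq1 : q ≤ 1) (hs : 0 ≤ s)
    (hu : 0 ≤ u) (hv : 0 ≤ v) : |(s + u) ^ q - (s + v) ^ q| ≤ |u - v| ^ q :=
  abs_sub_le_iff.2 ⟨rpow_add_sub_rpow_add_le hq0 hq1 hs hu hv,
    abs_sub_comm u v ▸ rpow_add_sub_rpow_add_le hq0 hq1 hs hv hu⟩

lemma rpow_sum_rpow_le {ι : Type*} (s : Finset ι) {a : ι → ℝ} {p C : ℝ} (hp : 0 < p)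
    (hC : 0 ≤ C) (ha : ∀ j ∈ s, 0 ≤ a j ∧ a j ≤ C) :
    (∑ j ∈ s, a j ^ p) ^ (1 / p) ≤ (s.card : ℝ) ^ (1 / p) * C := by
  have hsum : ∑ j ∈ s, a j ^ p ≤ s.card * C ^ p := by
    simpa using Finset.sum_le_sum fun j hj => Real.rpow_le_rpow (ha j hj).1 (ha j hj).2 hp.le
  calc (∑ j ∈ s, a j ^ p) ^ (1 / p) ≤ ((s.card : ℝ) * C ^ p) ^ (1 / p) :=
        Real.rpow_le_rpow (Finset.sum_nonneg fun j hj => Real.rpow_nonneg (ha j hj).1 p) hsum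
          (by positivity)
    _ = (s.card : ℝ) ^ (1 / p) * C := by
        rw [Real.mul_rpow (by positivity) (by positivity), one_div, Real.rpow_rpow_inv hC hp.ne']

lemma rpow_one_div_sq {x : ℝ} (hx : 0 ≤ x) (p : ℝ) : (x ^ (1 / p)) ^ 2 = x ^ (2 / p) := by
  rw [← Real.rpow_natCast, ← Real.rpow_mul hx]
  congr 1
  push_cast
  ring

lemma sq_rpow_one_div_eq_mul_rpow {x : ℝ} (hx : 0 < x) (p : ℝ) :
    (x ^ (1 / p)) ^ 2 = x * x ^ (2 / p - 1) := by
  rw [rpow_one_div_sq hx.le, mul_comm, ← Real.rpow_add_one hx.ne', sub_add_cancel]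

lemma mul_le_abs_sub_of_le_abs_div_sub_one {ε x E : ℝ} (hE : 0 ≤ E) (h : ε ≤ |x / E - 1|) :
    ε * E ≤ |x - E| := by
  rcases hE.eq_or_lt with rfl | hE
  · simp
  · rwa [div_sub_one hE.ne', abs_div, abs_of_pos hE, le_div_iff₀ hE] at h

lemma integrable_exp_mul_sub_of_abs_le {α : Type*} [MeasurableSpace α] {μ : Measure α}
    [IsFiniteMeasure μ] {f : α → ℝ} (hf : Measurable f) {B : ℝ} (hB : ∀ x, |f x| ≤ B)
    (t m : ℝ) : Integrable (fun x => Real.exp (t * (f x - m))) μ :=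
  integrable_exp_mul_of_mem_Icc (a := -B - m) (b := B - m) (hf.sub_const m).aemeasurable
    (ae_of_all _ fun x =>
      ⟨by linarith [neg_abs_le (f x), hB x], by linarith [le_abs_self (f x), hB x]⟩)

lemma hasSubgaussianMGF_sub_integral_of_abs_sub_le {α : Type*} [MeasurableSpace α]
    {ν : Measure α} [IsProbabilityMeasure ν] {h : α → ℝ} (hh : Measurable h) {c : ℝ≥0}
    (hc : ∀ a b, |h a - h b| ≤ c) :
    HasSubgaussianMGF (fun a => h a - ∫ b, h b ∂ν) (c ^ 2) ν := by
  obtain ⟨a₀⟩ := nonempty_of_isProbabilityMeasure ν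
  have hIcc : ∀ᵐ a ∂ν, h a ∈ Set.Icc (h a₀ - c) (h a₀ + c) :=
    ae_of_all _ fun a =>
      ⟨by linarith [(abs_le.1 (hc a a₀)).1], by linarith [(abs_le.1 (hc a a₀)).2]⟩
  convert hasSubgaussianMGF_of_mem_Icc hh.aemeasurable hIcc using 1
  ext
  simp [abs_of_nonneg]

lemma abs_integral_le_of_abs_le {α : Type*} [MeasurableSpace α] {μ : Measure α}
    [IsProbabilityMeasure μ] {f : α → ℝ} {B : ℝ} (hB : ∀ x, |f x| ≤ B) : |∫ x, f x ∂μ| ≤ B := by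
  simpa using norm_integral_le_of_norm_le_const (μ := μ) (f := f) (ae_of_all _ hB)

lemma ProbabilityTheory.HasSubgaussianMGF.measureReal_abs_ge_le {Ω : Type*} [MeasurableSpace Ω]
    {μ : Measure Ω} [IsFiniteMeasure μ] {X : Ω → ℝ} {c : ℝ≥0}
    (h : HasSubgaussianMGF X c μ) {ε : ℝ} (hε : 0 ≤ ε) :
    μ.real {ω | ε ≤ |X ω|} ≤ 2 * Real.exp (-ε ^ 2 / (2 * c)) := by
  have hsplit : {ω | ε ≤ |X ω|} = {ω | ε ≤ X ω} ∪ {ω | ε ≤ (-X) ω} := by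
    ext ω; simp [le_abs]
  calc μ.real {ω | ε ≤ |X ω|} ≤ μ.real {ω | ε ≤ X ω} + μ.real {ω | ε ≤ (-X) ω} :=
        hsplit ▸ measureReal_union_le _ _
    _ ≤ 2 * Real.exp (-ε ^ 2 / (2 * c)) := by
        linarith [h.measure_ge_le hε, h.neg.measure_ge_le hε]

section BoundedDifferences

variable {α : Type*} [MeasurableSpace α]

lemma integral_pi_fin_succ (ν : Measure α) [SigmaFinite ν] {d : ℕ}
    {G : (Fin (d + 1) → α) → ℝ} (hG : Integrable G (Measure.pi fun _ => ν)) :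
    ∫ x, G x ∂Measure.pi (fun _ => ν) = ∫ y, ∫ a, G (Fin.cons a y) ∂ν ∂Measure.pi (fun _ => ν) := by
  set e := (MeasurableEquiv.piFinSuccAbove (fun _ : Fin (d + 1) => α) 0).symm
  have he : ⇑e = fun z => Fin.cons z.1 z.2 := by
    ext z : 1
    simp [e, MeasurableEquiv.piFinSuccAbove_symm_apply]
    rfl
  have hmp := (measurePreserving_piFinSuccAbove (fun _ : Fin (d + 1) => ν) 0).symm
  have hint : Integrable (fun z => G (e z)) (ν.prod (Measure.pi fun _ => ν)) :=
    (hmp.integrable_comp_emb e.measurableEmbedding).2 hG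
  rw [← hmp.integral_comp' G, integral_prod_symm _ hint, he]

lemma measurable_fin_cons {d : ℕ} :
    Measurable fun z : α × (Fin d → α) => (Fin.cons z.1 z.2 : Fin (d + 1) → α) :=
  measurable_pi_iff.2 fun i =>
    Fin.cases measurable_fst (fun j => (measurable_pi_apply j).comp measurable_snd) i

lemma hasSubgaussianMGF_pi_succ (ν : Measure α) [IsProbabilityMeasure ν] {d : ℕ}
    {f : (Fin (d + 1) → α) → ℝ} (hf : Measurable f) {B : ℝ} (hB : ∀ x, |f x| ≤ B)
    {cF cg : ℝ≥0}
    (hF : ∀ y, HasSubgaussianMGF (fun a => f (Fin.cons a y) - ∫ b, f (Fin.cons b y) ∂ν) cF ν)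
    (hg : HasSubgaussianMGF
      (fun y => ∫ a, f (Fin.cons a y) ∂ν - ∫ x, f x ∂Measure.pi fun _ => ν) cg
      (Measure.pi fun _ => ν)) :
    HasSubgaussianMGF (fun x => f x - ∫ x, f x ∂Measure.pi fun _ => ν) (cg + cF)
      (Measure.pi fun _ => ν) := by
  set π := Measure.pi fun _ : Fin d => ν
  set g : (Fin d → α) → ℝ := fun y => ∫ a, f (Fin.cons a y) ∂ν
  set m := ∫ x, f x ∂Measure.pi fun _ => ν
  refine ⟨fun t => integrable_exp_mul_sub_of_abs_le hf hB t m, fun t => ?_⟩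
  calc mgf (fun x => f x - m) (Measure.pi fun _ => ν) t
      = ∫ y, Real.exp (t * (g y - m)) * mgf (fun a => f (Fin.cons a y) - g y) ν t ∂π := by
        rw [mgf, integral_pi_fin_succ ν (integrable_exp_mul_sub_of_abs_le hf hB t m)]
        refine integral_congr_ae (ae_of_all _ fun y => ?_)
        dsimp only [mgf]
        rw [← integral_const_mul]
        refine integral_congr_ae (ae_of_all _ fun a => ?_)
        simp only [← Real.exp_add]
        ring_nf
    _ ≤ ∫ y, Real.exp (t * (g y - m)) * Real.exp (cF * t ^ 2 / 2) ∂π := by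
        refine integral_mono_of_nonneg (ae_of_all _ fun y => ?_)
          ((hg.integrable_exp_mul t).mul_const _) (ae_of_all _ fun y => ?_)
        · exact mul_nonneg (Real.exp_nonneg _) mgf_nonneg
        · exact mul_le_mul_of_nonneg_left ((hF y).mgf_le t) (Real.exp_nonneg _)
    _ = mgf (fun y => g y - m) π t * Real.exp (cF * t ^ 2 / 2) := by
        rw [integral_mul_const, mgf]
    _ ≤ Real.exp (cg * t ^ 2 / 2) * Real.exp (cF * t ^ 2 / 2) := by
        gcongr
        exact hg.mgf_le t
    _ = Real.exp (↑(cg + cF) * t ^ 2 / 2) := by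
        rw [← Real.exp_add, NNReal.coe_add]
        ring_nf

theorem hasSubgaussianMGF_pi_sub_integral_of_abs_update_sub_le (ν : Measure α)
    [IsProbabilityMeasure ν] {c : ℝ≥0} {B : ℝ} {d : ℕ} {f : (Fin d → α) → ℝ}
    (hf : Measurable f) (hB : ∀ x, |f x| ≤ B)
    (hc : ∀ x i a, |f (Function.update x i a) - f x| ≤ c) :
    HasSubgaussianMGF (fun x => f x - ∫ y, f y ∂Measure.pi fun _ => ν) (d * c ^ 2)
      (Measure.pi fun _ => ν) := by
  induction d with
  | zero =>
    rw [Nat.cast_zero, zero_mul]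
    refine (HasSubgaussianMGF.fun_zero (μ := Measure.pi fun _ : Fin 0 => ν)).congr
      (ae_of_all _ fun x => ?_)
    simp [integral_unique, Unique.eq_default x]
  | succ d ih =>
    have hF : Measurable fun z : α × (Fin d → α) => f (Fin.cons z.1 z.2) :=
      hf.comp measurable_fin_cons
    have hFy : ∀ y, Measurable fun a => f (Fin.cons a y) := fun y =>
      hF.comp (measurable_id.prodMk measurable_const)
    have hFy_int : ∀ y, Integrable (fun a => f (Fin.cons a y)) ν := fun y =>
      Integrable.of_bound (hFy y).aestronglyMeasurable B (ae_of_all _ fun a => hB _)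
    have hgc : ∀ y i b, |∫ a, f (Fin.cons a (Function.update y i b)) ∂ν -
        ∫ a, f (Fin.cons a y) ∂ν| ≤ c := fun y i b => by
      rw [← integral_sub (hFy_int _) (hFy_int _)]
      refine abs_integral_le_of_abs_le fun a => ?_
      simpa only [Fin.cons_update] using hc (Fin.cons a y) i.succ b
    have hg := ih hF.stronglyMeasurable.integral_prod_left'.measurable
      (fun y => abs_integral_le_of_abs_le fun a => hB _) hgc
    rw [← integral_pi_fin_succ ν (Integrable.of_bound hf.aestronglyMeasurable B (ae_of_all _ hB))]
      at hg
    rw [Nat.cast_succ, add_one_mul]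
    refine hasSubgaussianMGF_pi_succ ν hf hB (fun y => ?_) hg
    exact hasSubgaussianMGF_sub_integral_of_abs_sub_le (hFy y) fun a b => by
      simpa only [Fin.update_cons_zero] using hc (Fin.cons b y) 0 a

end BoundedDifferences

section IID

variable {Ω β : Type*} [MeasurableSpace Ω] [MeasurableSpace β] {μ : Measure Ω} {X : ℕ → Ω → β}

lemma map_fin_eq_pi_of_iIndepFun (hX : ∀ j, Measurable (X j)) (hindep : iIndepFun X μ)
    (hident : ∀ j, IdentDistrib (X j) (X 0) μ μ) (d : ℕ) :
    μ.map (fun ω (j : Fin d) => X j ω) = Measure.pi fun _ => μ.map (X 0) := by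
  rw [iIndepFun.map_fun_eq_pi_map (f := fun j : Fin d => X j) (fun j => (hX j).aemeasurable)
    (hindep.precomp Fin.val_injective)]
  congr with j : 1
  exact (hident j).map_eq

theorem hasSubgaussianMGF_sub_integral_of_iIndepFun [IsProbabilityMeasure μ]
    (hX : ∀ j, Measurable (X j)) (hindep : iIndepFun X μ)
    (hident : ∀ j, IdentDistrib (X j) (X 0) μ μ) {c : ℝ≥0} {B : ℝ}
    {d : ℕ} {f : (Fin d → β) → ℝ} (hf : Measurable f) (hB : ∀ x, |f x| ≤ B)
    (hc : ∀ x i a, |f (Function.update x i a) - f x| ≤ c) :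
    HasSubgaussianMGF (fun ω => f (fun j => X j ω) - ∫ ω', f (fun j => X j ω') ∂μ) (d * c ^ 2)
      μ := by
  have hV : Measurable fun ω (j : Fin d) => X j ω := measurable_pi_lambda _ fun j => hX j
  have : IsProbabilityMeasure (μ.map (X 0)) := Measure.isProbabilityMeasure_map (hX 0).aemeasurable
  have h := hasSubgaussianMGF_pi_sub_integral_of_abs_update_sub_le (μ.map (X 0)) hf hB hc
  rw [← map_fin_eq_pi_of_iIndepFun hX hindep hident,
    integral_map hV.aemeasurable hf.aestronglyMeasurable] at h
  exact h.of_map hV.aemeasurable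

end IID

noncomputable def truncLpNorm (p C : ℝ) {d : ℕ} (x : Fin d → ℝ) : ℝ :=
  (∑ j, (min |x j| C) ^ p) ^ (1 / p)

section truncLpNorm

variable {p C : ℝ} {d : ℕ}

lemma measurable_truncLpNorm (p C : ℝ) (d : ℕ) : Measurable (truncLpNorm p C (d := d)) := by
  unfold truncLpNorm
  fun_prop

lemma truncLpNorm_eq (x : Fin d → ℝ) (hx : ∀ j, |x j| ≤ C) :
    truncLpNorm p C x = (∑ j, |x j| ^ p) ^ (1 / p) := by
  simp only [truncLpNorm, min_eq_left (hx _)]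

lemma abs_truncLpNorm_le (hp : 0 < p) (hC : 0 ≤ C) (x : Fin d → ℝ) :
    |truncLpNorm p C x| ≤ (d : ℝ) ^ (1 / p) * C := by
  have hmin : ∀ j, 0 ≤ min |x j| C := fun j => le_min (abs_nonneg _) hC
  rw [truncLpNorm, abs_of_nonneg
    (Real.rpow_nonneg (Finset.sum_nonneg fun j _ => Real.rpow_nonneg (hmin j) p) _)]
  simpa using rpow_sum_rpow_le Finset.univ hp hC fun j _ => ⟨hmin j, min_le_right _ _⟩

lemma abs_truncLpNorm_update_sub_le (hp : 1 ≤ p) (hC : 0 ≤ C) (x : Fin d → ℝ) (i : Fin d)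
    (a : ℝ) : |truncLpNorm p C (Function.update x i a) - truncLpNorm p C x| ≤ C := by
  have hp0 : 0 < p := by linarith
  set φ : ℝ → ℝ := fun t => (min |t| C) ^ p
  have hφ : ∀ t, 0 ≤ φ t ∧ φ t ≤ C ^ p := fun t =>
    ⟨Real.rpow_nonneg (le_min (abs_nonneg t) hC) p,
      Real.rpow_le_rpow (le_min (abs_nonneg t) hC) (min_le_right _ _) hp0.le⟩
  set s := ∑ j ∈ Finset.univ.erase i, φ (x j)
  have hupd : ∑ j, φ (Function.update x i a j) = s + φ a := by
    rw [← Finset.add_sum_erase _ _ (Finset.mem_univ i), Function.update_self, add_comm]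
    congr 1
    exact Finset.sum_congr rfl fun j hj => by rw [Function.update_of_ne (Finset.ne_of_mem_erase hj)]
  have hx : ∑ j, φ (x j) = s + φ (x i) := by
    rw [← Finset.add_sum_erase _ _ (Finset.mem_univ i), add_comm]
  have hdiff : |φ a - φ (x i)| ≤ C ^ p := abs_sub_le_iff.2
    ⟨by linarith [hφ a, hφ (x i)], by linarith [hφ a, hφ (x i)]⟩
  calc |truncLpNorm p C (Function.update x i a) - truncLpNorm p C x|
      = |(s + φ a) ^ (1 / p) - (s + φ (x i)) ^ (1 / p)| := by
        rw [truncLpNorm, truncLpNorm, ← hupd, ← hx]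
    _ ≤ |φ a - φ (x i)| ^ (1 / p) :=
        abs_rpow_add_sub_rpow_add_le (by positivity) ((div_le_one hp0).2 hp)
          (Finset.sum_nonneg fun j _ => (hφ _).1) (hφ a).1 (hφ _).1
    _ ≤ (C ^ p) ^ (1 / p) := Real.rpow_le_rpow (abs_nonneg _) hdiff (by positivity)
    _ = C := by rw [one_div, Real.rpow_rpow_inv hC hp0.ne']

end truncLpNorm

lemma ae_forall_abs_le_of_identDistrib {Ω : Type*} [MeasurableSpace Ω] {μ : Measure Ω}
    {X : ℕ → Ω → ℝ} (hident : ∀ j, IdentDistrib (X j) (X 0) μ μ) {C : ℝ}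
    (hbdd : ∀ᵐ ω ∂μ, |X 0 ω| ≤ C) : ∀ᵐ ω ∂μ, ∀ j, |X j ω| ≤ C :=
  ae_all_iff.2 fun j =>
    (hident j).symm.ae_snd (measurableSet_le continuous_abs.measurable measurable_const) hbdd

noncomputable def partialLpNorm {Ω : Type*} (X : ℕ → Ω → ℝ) (p : ℝ) (d : ℕ) (ω : Ω) : ℝ :=
  (∑ j ∈ Finset.range d, |X j ω| ^ p) ^ (1 / p)

lemma partialLpNorm_nonneg {Ω : Type*} (X : ℕ → Ω → ℝ) (p : ℝ) (d : ℕ) (ω : Ω) :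
    0 ≤ partialLpNorm X p d ω :=
  Real.rpow_nonneg (Finset.sum_nonneg fun _ _ => Real.rpow_nonneg (abs_nonneg _) p) _

section partialLpNorm

variable {Ω : Type*} [MeasurableSpace Ω] {μ : Measure Ω} [IsProbabilityMeasure μ]
  {X : ℕ → Ω → ℝ} {p C : ℝ}

lemma measurable_partialLpNorm (hX : ∀ j, Measurable (X j)) (p : ℝ) (d : ℕ) :
    Measurable (partialLpNorm X p d) := by
  unfold partialLpNorm
  fun_prop

theorem measureReal_abs_partialLpNorm_sub_integral_ge_le (hX : ∀ j, Measurable (X j))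
    (hindep : iIndepFun X μ) (hident : ∀ j, IdentDistrib (X j) (X 0) μ μ) (hp : 1 ≤ p)
    (hC : 0 ≤ C) (hbdd : ∀ᵐ ω ∂μ, |X 0 ω| ≤ C) (d : ℕ) {t : ℝ} (ht : 0 ≤ t) :
    μ.real {ω | t ≤ |partialLpNorm X p d ω - ∫ ω', partialLpNorm X p d ω' ∂μ|} ≤
      2 * Real.exp (-t ^ 2 / (2 * d * C ^ 2)) := by
  have htrunc : (fun ω => truncLpNorm p C fun j : Fin d => X j ω) =ᵐ[μ] partialLpNorm X p d := by
    filter_upwards [ae_forall_abs_le_of_identDistrib hident hbdd] with ω hω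
    rw [truncLpNorm_eq _ fun j => hω j, partialLpNorm,
      Fin.sum_univ_eq_sum_range (fun j => |X j ω| ^ p)]
  have h := hasSubgaussianMGF_sub_integral_of_iIndepFun (c := C.toNNReal) hX hindep hident
    (measurable_truncLpNorm p C d) (abs_truncLpNorm_le (by linarith) hC)
    (by simpa [hC] using abs_truncLpNorm_update_sub_le hp hC)
  rw [integral_congr_ae htrunc] at h
  have := (h.congr (Y := fun ω => partialLpNorm X p d ω - ∫ ω', partialLpNorm X p d ω' ∂μ)
    (htrunc.mono fun ω hω => by dsimp only at hω ⊢; rw [hω])).measureReal_abs_ge_le ht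
  simpa [mul_assoc, hC] using this

theorem tendsto_integral_partialLpNorm_div_rpow (hX : ∀ j, Measurable (X j))
    (hindep : iIndepFun X μ) (hident : ∀ j, IdentDistrib (X j) (X 0) μ μ) (hp : 0 < p)
    (hC : 0 ≤ C) (hbdd : ∀ᵐ ω ∂μ, |X 0 ω| ≤ C) :
    Tendsto (fun d : ℕ => (∫ ω, partialLpNorm X p d ω ∂μ) / (d : ℝ) ^ (1 / p)) atTop
      (nhds ((∫ ω, |X 0 ω| ^ p ∂μ) ^ (1 / p))) := by
  have hφ : Measurable fun x : ℝ => |x| ^ p := by fun_prop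
  have hint : Integrable (fun ω => |X 0 ω| ^ p) μ :=
    Integrable.of_bound (hφ.comp (hX 0)).aestronglyMeasurable (C ^ p) (hbdd.mono fun ω hω => by
      rw [Real.norm_eq_abs, abs_of_nonneg (by positivity)]
      exact Real.rpow_le_rpow (abs_nonneg _) hω hp.le)
  have hslln := strong_law_ae (fun j ω => |X j ω| ^ p) hint
    (fun i j hij => (hindep.comp (fun _ => fun x => |x| ^ p) fun _ => hφ).indepFun hij)
    fun j => (hident j).comp hφ
  have hconv : ∀ᵐ ω ∂μ, Tendsto (fun d : ℕ => partialLpNorm X p d ω / (d : ℝ) ^ (1 / p)) atTop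
      (nhds ((∫ ω, |X 0 ω| ^ p ∂μ) ^ (1 / p))) := by
    filter_upwards [hslln] with ω hω
    refine ((Real.continuousAt_rpow_const _ _ (Or.inr (by positivity))).tendsto.comp hω).congr
      fun d => ?_
    rw [Function.comp_apply, smul_eq_mul, inv_mul_eq_div, partialLpNorm,
      Real.div_rpow (Finset.sum_nonneg fun j _ => by positivity) (Nat.cast_nonneg d)]
  have hdom : ∀ d : ℕ, ∀ᵐ ω ∂μ, ‖partialLpNorm X p d ω / (d : ℝ) ^ (1 / p)‖ ≤ C := by
    intro d
    filter_upwards [ae_forall_abs_le_of_identDistrib hident hbdd] with ω hω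
    rw [Real.norm_eq_abs, abs_of_nonneg (div_nonneg (partialLpNorm_nonneg X p d ω) (by positivity))]
    refine div_le_of_le_mul₀ (by positivity) hC ?_
    simpa [partialLpNorm, mul_comm] using
      rpow_sum_rpow_le (Finset.range d) hp hC fun j _ => ⟨abs_nonneg _, hω j⟩
  simpa [integral_div] using tendsto_integral_of_dominated_convergence (fun _ => C)
    (fun d => ((measurable_partialLpNorm hX p d).div_const _).aestronglyMeasurable)
    (integrable_const C) hdom hconv

theorem tendsto_sq_integral_partialLpNorm_div (hX : ∀ j, Measurable (X j))
    (hindep : iIndepFun X μ) (hident : ∀ j, IdentDistrib (X j) (X 0) μ μ) (hp : 0 < p)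
    (hC : 0 ≤ C) (hbdd : ∀ᵐ ω ∂μ, |X 0 ω| ≤ C) :
    Tendsto (fun d : ℕ => (∫ ω, partialLpNorm X p d ω ∂μ) ^ 2 / d / (d : ℝ) ^ (2 / p - 1))
      atTop (nhds ((∫ ω, |X 0 ω| ^ p ∂μ) ^ (2 / p))) := by
  have h := (tendsto_integral_partialLpNorm_div_rpow hX hindep hident hp hC hbdd).pow 2
  rw [rpow_one_div_sq (integral_nonneg fun ω => by positivity)] at h
  refine h.congr' ((eventually_ge_atTop 1).mono fun d hd => ?_)
  rw [div_pow, sq_rpow_one_div_eq_mul_rpow (by positivity), ← div_div]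

end partialLpNorm

/-- Fix `p ≥ 1` and assume `0 < |X| ≤ C` a.s. for some `C > 0`.  Then for
every `ε > 0`, as `d → ∞`,
`P{ |‖X‖_p/E‖X‖_p − 1| ≥ ε } ≤ 2 exp(−ε² d^{2/p−1} μ_p^{2/p} / (2C²) + o(d^{2/p−1}))`;
more precisely, for every `d ≥ 1`,
`P{ |‖X‖_p − E‖X‖_p| ≥ ε E‖X‖_p } ≤ 2 exp(−ε² (E‖X‖_p)² / (2 d C²))`. -/
theorem stmt_14 {Ω : Type*} [MeasurableSpace Ω] (μ : Measure Ω) [IsProbabilityMeasure μ]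
    (X : ℕ → Ω → ℝ)
    (hXmeas : ∀ j, Measurable (X j))
    (hindep : iIndepFun X μ)
    (hident : ∀ j, IdentDistrib (X j) (X 0) μ μ)
    (p : ℝ) (hp : 1 ≤ p)
    (C : ℝ) (hC : 0 < C)
    (hbdd : ∀ᵐ ω ∂μ, 0 < |X 0 ω| ∧ |X 0 ω| ≤ C)
    (μp : ℝ) (hμp : μp = ∫ ω, |X 0 ω| ^ p ∂μ)
    (Np : ℕ → Ω → ℝ)
    (hNp : ∀ d ω, Np d ω = (∑ j ∈ Finset.range d, |X j ω| ^ p) ^ (1 / p)) :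
    (∀ ε : ℝ, 0 < ε →
      ∃ e : ℕ → ℝ,
        Tendsto (fun d : ℕ => e d / (d : ℝ) ^ (2 / p - 1)) atTop (nhds 0) ∧
          ∀ᶠ d : ℕ in atTop,
            (μ {ω | ε ≤ |Np d ω / (∫ ω', Np d ω' ∂μ) - 1|}).toReal ≤
              2 * Real.exp (-(ε ^ 2 * (d : ℝ) ^ (2 / p - 1) * μp ^ (2 / p)) / (2 * C ^ 2)
                + e d))
    ∧ (∀ ε : ℝ, 0 < ε → ∀ d : ℕ, 1 ≤ d →
        (μ {ω | ε * (∫ ω', Np d ω' ∂μ) ≤ |Np d ω - ∫ ω', Np d ω' ∂μ|}).toReal ≤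
          2 * Real.exp (-(ε ^ 2 * (∫ ω', Np d ω' ∂μ) ^ 2) / (2 * d * C ^ 2))) := by
  obtain rfl : Np = partialLpNorm X p := funext₂ hNp
  have hbddC : ∀ᵐ ω ∂μ, |X 0 ω| ≤ C := hbdd.mono fun _ h => h.2
  set E : ℕ → ℝ := fun d => ∫ ω, partialLpNorm X p d ω ∂μ
  have hE : ∀ d, 0 ≤ E d := fun d => integral_nonneg (partialLpNorm_nonneg X p d)
  have tail : ∀ ε : ℝ, 0 ≤ ε → ∀ d : ℕ, μ.real {ω | ε * E d ≤ |partialLpNorm X p d ω - E d|} ≤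
      2 * Real.exp (-(ε ^ 2 * E d ^ 2) / (2 * d * C ^ 2)) := fun ε hε d => by
    simpa [mul_pow] using measureReal_abs_partialLpNorm_sub_integral_ge_le hXmeas hindep hident
      hp hC.le hbddC d (mul_nonneg hε (hE d))
  have hlim : Tendsto (fun d : ℕ => E d ^ 2 / d / (d : ℝ) ^ (2 / p - 1)) atTop
      (nhds (μp ^ (2 / p))) :=
    hμp ▸ tendsto_sq_integral_partialLpNorm_div hXmeas hindep hident (by linarith) hC.le hbddC
  -- `e d` is the gap between the exponent of the second bound and the leading term.
  refine ⟨fun ε hε => ⟨fun d => ε ^ 2 * ((d : ℝ) ^ (2 / p - 1) * μp ^ (2 / p) - E d ^ 2 / d)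
    / (2 * C ^ 2), ?_, Eventually.of_forall fun d => ?_⟩, fun ε hε d _ => tail ε hε.le d⟩
  · have h := (((tendsto_const_nhds (x := μp ^ (2 / p))).sub hlim).const_mul (ε ^ 2)).div_const
      (2 * C ^ 2)
    rw [sub_self, mul_zero, zero_div] at h
    refine h.congr' ((eventually_ge_atTop 1).mono fun d hd => ?_)
    have : 0 < (d : ℝ) ^ (2 / p - 1) := by positivity
    field_simp
  · calc μ.real {ω | ε ≤ |partialLpNorm X p d ω / E d - 1|}
        ≤ μ.real {ω | ε * E d ≤ |partialLpNorm X p d ω - E d|} :=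
          measureReal_mono fun ω => mul_le_abs_sub_of_le_abs_div_sub_one (hE d)
      _ ≤ 2 * Real.exp (-(ε ^ 2 * E d ^ 2) / (2 * d * C ^ 2)) := tail ε hε.le d
      _ = _ := by
          congr 2
          ring
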